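/- Let q : V → ℝ and Q : V × V → ℝ, and define the edge residues R(u,v) = (1−α)·q(u)·A(u,v)/d(u) − Q(u,v) for all (u,v) ∈ V × V. Suppose the invariant holds: for every t ∈ V, π_s(t) = α·q(t) + Σ_{(u,v)∈V×V} R(u,v)·π_v(t). Fix an ordered pair (u₀,v₀) ∈ V × V, let y = R(u₀,v₀), and perform an edge-based push on (u₀,v₀): define q' = q + y·e_{v₀} and Q' = Q + y·E_{u₀v₀} (where E_{u₀v₀} is the matrix that is 1 at entry (u₀,v₀) and 0 elsewhere), and let R'(u,v) = (1−α)·q'(u)·A(u,v)/d(u) − Q'(u,v). Then the invariant still holds: for every t ∈ V, π_s(t) = α·q'(t) + Σ_{(u,v)∈V×V} R'(u,v)·π_v(t). Moreover the invariant holds at the initial stage q = e_s, Q = 0. -/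
import Mathlib


open Finset

/-- Weighted degree of a node. -/
noncomputable def deg {V : Type*} [Fintype V] (A : V → V → ℝ) (u : V) : ℝ := ∑ v, A u v

/-- Transition matrix `P t v = A t v / d v` (column-stochastic). -/
noncomputable def transP {V : Type*} [Fintype V] (A : V → V → ℝ) : Matrix V V ℝ :=
  Matrix.of fun t v => A t v / deg A v

/-- Single-source personalized PageRank: `π_x = Σ_{ℓ≥0} α(1-α)^ℓ P^ℓ e_x`. -/
noncomputable def ppr {V : Type*} [Fintype V] [DecidableEq V]
    (A : V → V → ℝ) (α : ℝ) (x t : V) : ℝ :=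
  ∑' ℓ : ℕ, α * (1 - α) ^ ℓ * ((transP A ^ ℓ).mulVec (Pi.single x 1)) t
section aux
variable {V : Type*} [Fintype V] [DecidableEq V]

lemma pow_entry_nonneg (A : V → V → ℝ) (hnonneg : ∀ u v, 0 ≤ A u v)
    (hdeg : ∀ u, 0 < deg A u) (ℓ : ℕ) : ∀ t x : V, 0 ≤ (transP A ^ ℓ) t x := by
  induction ℓ with
  | zero => intro t x; simp [Matrix.one_apply]; split <;> norm_num
  | succ n ih =>
    intro t x
    rw [pow_succ, Matrix.mul_apply]
    exact Finset.sum_nonneg fun v _ =>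
      mul_nonneg (ih t v) (div_nonneg (hnonneg v x) (hdeg x).le)

lemma pow_col_sum (A : V → V → ℝ) (hsymm : ∀ u v, A u v = A v u)
    (hdeg : ∀ u, 0 < deg A u) (ℓ : ℕ) : ∀ x : V, ∑ t, (transP A ^ ℓ) t x = 1 := by
  induction ℓ with
  | zero => intro x; simp [Matrix.one_apply]
  | succ n ih =>
    intro x
    simp only [pow_succ, Matrix.mul_apply]
    rw [Finset.sum_comm]
    have : ∀ v : V, ∑ t, (transP A ^ n) t v * transP A v x
        = transP A v x := by
      intro v; rw [← Finset.sum_mul, ih v, one_mul]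
    rw [Finset.sum_congr rfl fun v _ => this v]
    have : ∑ v, transP A v x = (∑ v, A v x) / deg A x := by
      simp [transP, Finset.sum_div]
    rw [this]
    have : ∑ v, A v x = deg A x := by
      rw [deg]; exact Finset.sum_congr rfl fun v _ => (hsymm v x)
    rw [this, div_self (hdeg x).ne']

lemma pow_entry_le_one (A : V → V → ℝ) (hsymm : ∀ u v, A u v = A v u)
    (hnonneg : ∀ u v, 0 ≤ A u v) (hdeg : ∀ u, 0 < deg A u) (ℓ : ℕ) (t x : V) :
    (transP A ^ ℓ) t x ≤ 1 := by
  rw [← pow_col_sum A hsymm hdeg ℓ x]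
  exact Finset.single_le_sum (fun v _ => pow_entry_nonneg A hnonneg hdeg ℓ v x)
    (Finset.mem_univ t)

lemma mulVec_single_eq (M : Matrix V V ℝ) (x t : V) :
    M.mulVec (Pi.single x 1) t = M t x := by
  simp [Matrix.mulVec, dotProduct, Pi.single_apply, mul_ite]

lemma ppr_eq_tsum (A : V → V → ℝ) (α : ℝ) (x t : V) :
    ppr A α x t = ∑' ℓ : ℕ, α * (1 - α) ^ ℓ * (transP A ^ ℓ) t x := by
  unfold ppr
  exact tsum_congr fun ℓ => by rw [mulVec_single_eq]

lemma ppr_summable (A : V → V → ℝ) (hsymm : ∀ u v, A u v = A v u)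
    (hnonneg : ∀ u v, 0 ≤ A u v) (hdeg : ∀ u, 0 < deg A u)
    (α : ℝ) (hα : α ∈ Set.Ioo (0 : ℝ) 1) (x t : V) :
    Summable (fun ℓ : ℕ => α * (1 - α) ^ ℓ * (transP A ^ ℓ) t x) := by
  have hgeo : Summable (fun ℓ : ℕ => α * (1 - α) ^ ℓ) :=
    (summable_geometric_of_lt_one (by linarith [hα.1, hα.2]) (by linarith [hα.1])).mul_left α
  refine Summable.of_nonneg_of_le (fun ℓ => ?_) (fun ℓ => ?_) hgeo
  · exact mul_nonneg (mul_nonneg hα.1.le (pow_nonneg (by linarith [hα.2]) _))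
      (pow_entry_nonneg A hnonneg hdeg ℓ t x)
  · calc α * (1 - α) ^ ℓ * (transP A ^ ℓ) t x ≤ α * (1 - α) ^ ℓ * 1 := by
          apply mul_le_mul_of_nonneg_left (pow_entry_le_one A hsymm hnonneg hdeg ℓ t x)
          exact mul_nonneg hα.1.le (pow_nonneg (by linarith [hα.2]) _)
        _ = α * (1 - α) ^ ℓ := mul_one _

lemma ppr_rec (A : V → V → ℝ) (hsymm : ∀ u v, A u v = A v u)
    (hnonneg : ∀ u v, 0 ≤ A u v) (hdeg : ∀ u, 0 < deg A u)
    (α : ℝ) (hα : α ∈ Set.Ioo (0 : ℝ) 1) (x t : V) :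
    ppr A α x t = α * (if t = x then 1 else 0)
      + (1 - α) * ∑ v, (A x v / deg A x) * ppr A α v t := by
  have hsum : ∀ v : V, Summable (fun ℓ : ℕ => α * (1 - α) ^ ℓ * (transP A ^ ℓ) t v) :=
    fun v => ppr_summable A hsymm hnonneg hdeg α hα v t
  rw [ppr_eq_tsum]
  rw [Summable.tsum_eq_zero_add (hsum x)]
  congr 1
  · simp [Matrix.one_apply]
  · have hterm : ∀ ℓ : ℕ, α * (1 - α) ^ (ℓ + 1) * (transP A ^ (ℓ + 1)) t x
        = ∑ v, (1 - α) * ((A x v / deg A x) * (α * (1 - α) ^ ℓ * (transP A ^ ℓ) t v)) := by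
      intro ℓ
      rw [pow_succ (transP A), Matrix.mul_apply, Finset.mul_sum]
      refine Finset.sum_congr rfl fun v _ => ?_
      have : transP A v x = A x v / deg A x := by
        simp [transP]; rw [hsymm v x]
      rw [this]; ring
    calc (∑' ℓ : ℕ, α * (1 - α) ^ (ℓ + 1) * (transP A ^ (ℓ + 1)) t x)
        = ∑' ℓ : ℕ, ∑ v, (1 - α) * ((A x v / deg A x) * (α * (1 - α) ^ ℓ * (transP A ^ ℓ) t v)) :=
          tsum_congr hterm
      _ = ∑ v, ∑' ℓ : ℕ, (1 - α) * ((A x v / deg A x) * (α * (1 - α) ^ ℓ * (transP A ^ ℓ) t v)) := by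
          rw [Summable.tsum_finsetSum]
          intro v _
          exact ((hsum v).mul_left _).mul_left _
      _ = (1 - α) * ∑ v, (A x v / deg A x) * ppr A α v t := by
          rw [Finset.mul_sum]
          refine Finset.sum_congr rfl fun v _ => ?_
          rw [tsum_mul_left, tsum_mul_left, ppr_eq_tsum]

end aux

/-- **EdgePush invariant (Lemma 4.1)**: the invariant
`π_s(t) = α·q(t) + Σ_{(u,v)} R(u,v)·π_v(t)`, where
`R(u,v) = (1-α)·q(u)·A(u,v)/d(u) − Q(u,v)`, is preserved by an edge-based push
on an edge `(u₀, v₀)`, and holds at the initial stage `q = e_s`, `Q = 0`. -/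
theorem edgepush_invariant
    {V : Type*} [Fintype V] [DecidableEq V] [Nonempty V]
    (A : V → V → ℝ)
    (hsymm : ∀ u v : V, A u v = A v u)
    (hnonneg : ∀ u v : V, 0 ≤ A u v)
    (hdeg : ∀ u : V, 0 < deg A u)
    (α : ℝ) (hα : α ∈ Set.Ioo (0 : ℝ) 1)
    (s : V)
    (q : V → ℝ) (Q : V → V → ℝ)
    (R : V → V → ℝ)
    (hR : ∀ u v : V, R u v = (1 - α) * q u * (A u v / deg A u) - Q u v)
    (hinv : ∀ t : V,
      ppr A α s t = α * q t + ∑ p : V × V, R p.1 p.2 * ppr A α p.2 t)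
    (u₀ v₀ : V) (y : ℝ) (hy : y = R u₀ v₀)
    (q' : V → ℝ) (hq' : ∀ v : V, q' v = q v + y * (if v = v₀ then 1 else 0))
    (Q' : V → V → ℝ)
    (hQ' : ∀ u v : V, Q' u v = Q u v + y * (if u = u₀ ∧ v = v₀ then 1 else 0))
    (R' : V → V → ℝ)
    (hR' : ∀ u v : V, R' u v = (1 - α) * q' u * (A u v / deg A u) - Q' u v) :
    (∀ t : V,
      ppr A α s t = α * q' t + ∑ p : V × V, R' p.1 p.2 * ppr A α p.2 t) ∧
    (∀ t : V,
      ppr A α s t = α * (if t = s then (1 : ℝ) else 0)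
        + ∑ p : V × V,
            ((1 - α) * (if p.1 = s then (1 : ℝ) else 0) * (A p.1 p.2 / deg A p.1) - 0)
              * ppr A α p.2 t) := by
  constructor
  · intro t
    have key := ppr_rec A hsymm hnonneg hdeg α hα v₀ t
    have hRR : ∀ u v : V, R' u v = R u v
        + y * ((1 - α) * (if u = v₀ then 1 else 0) * (A u v / deg A u)
              - (if u = u₀ ∧ v = v₀ then 1 else 0)) := by
      intro u v; rw [hR', hR, hq' u, hQ' u v]; ring
    have e1 : ∑ p : V × V,
        ((1 - α) * (if p.1 = v₀ then (1:ℝ) else 0) * (A p.1 p.2 / deg A p.1)) * ppr A α p.2 t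
        = (1 - α) * ∑ v, (A v₀ v / deg A v₀) * ppr A α v t := by
      rw [Fintype.sum_prod_type,
        Finset.sum_eq_single v₀ (fun u _ hu => by simp [hu]) (by simp), Finset.mul_sum]
      exact Finset.sum_congr rfl fun v _ => by rw [if_pos rfl]; ring
    have e2 : ∑ p : V × V,
        (if p.1 = u₀ ∧ p.2 = v₀ then (1:ℝ) else 0) * ppr A α p.2 t = ppr A α v₀ t := by
      rw [Fintype.sum_prod_type,
        Finset.sum_eq_single u₀ (fun u _ hu => by simp [hu]) (by simp)]
      simp
    have hsum' : ∑ p : V × V, R' p.1 p.2 * ppr A α p.2 t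
        = ∑ p : V × V, R p.1 p.2 * ppr A α p.2 t
          + y * ((1 - α) * (∑ v, (A v₀ v / deg A v₀) * ppr A α v t) - ppr A α v₀ t) := by
      have : ∑ p : V × V, R' p.1 p.2 * ppr A α p.2 t
          = ∑ p : V × V, (R p.1 p.2 * ppr A α p.2 t
            + y * (((1 - α) * (if p.1 = v₀ then (1:ℝ) else 0) * (A p.1 p.2 / deg A p.1)) * ppr A α p.2 t
              - (if p.1 = u₀ ∧ p.2 = v₀ then (1:ℝ) else 0) * ppr A α p.2 t)) :=
        Finset.sum_congr rfl fun p _ => by rw [hRR]; ring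
      rw [this, Finset.sum_add_distrib, ← Finset.mul_sum, Finset.sum_sub_distrib, e1, e2]
    have hI : (1 - α) * (∑ v, (A v₀ v / deg A v₀) * ppr A α v t) - ppr A α v₀ t
        = -(α * (if t = v₀ then (1:ℝ) else 0)) := by linarith [key]
    rw [hinv t, hq' t, hsum', hI]; ring
  · intro t
    simp only [sub_zero]
    have e3 : ∑ p : V × V,
        ((1 - α) * (if p.1 = s then (1:ℝ) else 0) * (A p.1 p.2 / deg A p.1)) * ppr A α p.2 t
        = (1 - α) * ∑ v, (A s v / deg A s) * ppr A α v t := by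
      rw [Fintype.sum_prod_type,
        Finset.sum_eq_single s (fun u _ hu => by simp [hu]) (by simp), Finset.mul_sum]
      exact Finset.sum_congr rfl fun v _ => by rw [if_pos rfl]; ring
    rw [e3]
    exact ppr_rec A hsymm hnonneg hdeg α hα s t
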